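/- arXiv:1606.08153 — 2 statements merged into one kernel-verified Lean document; each statement's English description precedes it below -/
import Mathlib

section
/- For all real x with 0 < x ≤ 1/108, the series ∑_{n≥0} S_n x^n converges and equals sin((2/3)·arcsin(6√(3x)))/(8√(3x)), where S_0 = 1/2 and S_n = C(6n,3n)·C(3n,n)/(2(2n+1)·C(2n,n)) for n ≥ 1. -/
/-!
The coefficients `S n` are, up to the factor `(3/4) 108ⁿ`, the odd Taylor coefficients of
`sin (2/3 · arcsin u)`, and `u = 6 √(3x)` turns `108ⁿ xⁿ` into `u²ⁿ`. Both satisfy the two-term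
recurrence coming from the differential equation `(1 - u²) y'' - u y' + a² y = 0` (with
`a = 2/3`), which `sin (a · arcsin u)` solves. To identify the power series with
`sin (a · arcsin u)` on `(-1, 1)`, substitute `u = sin θ`: the difference `G θ` of the two sides
satisfies `G'' = -a² G` with `G 0 = G' 0 = 0`, and the energy `G'² + a² G²` is constant, hence
zero. At `u = 1` (that is, `x = 1/108`) the coefficients are nonnegative, so their partial sums
are bounded by `1`, and Abel's theorem passes to the limit.
-/

/-- Real-valued sequence with `S 0 = 1/2` and
`S n = C(6n,3n)·C(3n,n)/(2(2n+1)·C(2n,n))` for `n ≥ 1`. -/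
noncomputable def S (n : ℕ) : ℝ :=
  if n = 0 then 1 / 2 else
    (Nat.choose (6 * n) (3 * n) * Nat.choose (3 * n) n : ℝ)
      / (2 * (2 * n + 1) * Nat.choose (2 * n) n)

open Real Set Nat Filter Topology

lemma summable_mul_pow_of_abs_le {c : ℕ → ℝ} (hc : ∀ k, |c k| ≤ (k + 1) * (k + 2)) {u : ℝ}
    (hu : |u| < 1) : Summable fun k => c k * u ^ k := by
  refine .of_norm_bounded ((summable_descFactorial_mul_geometric_of_norm_lt_one 2
    (by rwa [norm_abs_eq_norm] : ‖|u|‖ < 1))) fun k => ?_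
  rw [norm_mul, norm_pow, Real.norm_eq_abs, Real.norm_eq_abs, Nat.descFactorial_succ,
    Nat.descFactorial_one]
  push_cast
  gcongr
  exact (hc k).trans_eq (by ring_nf)

lemma hasDerivAt_tsum_mul_pow {c : ℕ → ℝ} (hc : ∀ k, |c k| ≤ k + 1) {u : ℝ} (hu : |u| < 1) :
    HasDerivAt (fun x => ∑' k, c k * x ^ k) (∑' k, (k + 1) * c (k + 1) * u ^ k) u := by
  obtain ⟨r, hur, hr1⟩ := exists_between hu
  have hr : 0 < r := (abs_nonneg u).trans_lt hur
  have hsum : Summable fun k => |c k| * k * r ^ (k - 1) := by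
    refine (summable_nat_add_iff 1).1 (summable_mul_pow_of_abs_le (fun k => ?_)
      (by rwa [abs_of_pos hr]))
    rw [abs_of_nonneg (by positivity)]
    have := hc (k + 1)
    push_cast at this ⊢
    nlinarith [k.cast_nonneg (α := ℝ)]
  have hbound (k : ℕ) {y : ℝ} (hy : |y| ≤ r) :
      ‖c k * (k * y ^ (k - 1))‖ ≤ |c k| * k * r ^ (k - 1) := by
    rw [norm_mul, norm_mul, norm_pow, Real.norm_natCast, Real.norm_eq_abs, Real.norm_eq_abs,
      ← mul_assoc]
    gcongr
  have hderiv := hasDerivAt_tsum_of_isPreconnected hsum isOpen_Ioo (convex_Ioo _ _).isPreconnected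
    (g := fun k x => c k * x ^ k) (g' := fun k x => c k * (k * x ^ (k - 1)))
    (fun k y _ => (hasDerivAt_pow k y).const_mul (c k))
    (fun k y hy => hbound k (abs_lt.2 hy).le)
    (show (0 : ℝ) ∈ Ioo (-r) r by simpa using hr)
    (summable_of_ne_finset_zero (s := {0}) fun k hk => by simp_all) (abs_lt.1 hur)
  refine hderiv.congr_deriv ?_
  rw [(Summable.of_norm_bounded hsum fun k => hbound k hur.le).tsum_eq_zero_add]
  simp only [CharP.cast_eq_zero, zero_mul, mul_zero, zero_add, Nat.cast_add, Nat.cast_one,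
    add_tsub_cancel_right]
  exact tsum_congr fun k => by ring

lemma eq_zero_of_hasDerivAt_eq_neg_sq_mul {G G' : ℝ → ℝ} {s : Set ℝ} {ω t₀ : ℝ}
    (hs : IsOpen s) (hs' : IsPreconnected s) (hω : ω ≠ 0)
    (hG : ∀ t ∈ s, HasDerivAt G (G' t) t) (hG' : ∀ t ∈ s, HasDerivAt G' (-(ω ^ 2 * G t)) t)
    (ht₀ : t₀ ∈ s) (h₀ : G t₀ = 0) (h₀' : G' t₀ = 0) {t : ℝ} (ht : t ∈ s) : G t = 0 := by
  have hE (t : ℝ) (ht : t ∈ s) : HasDerivAt (fun t => G' t ^ 2 + ω ^ 2 * G t ^ 2) 0 t := by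
    refine (((hG' t ht).pow 2).add (((hG t ht).pow 2).const_mul (ω ^ 2))).congr_deriv ?_
    ring
  have hconst := hs.is_const_of_deriv_eq_zero hs'
    (fun t ht => (hE t ht).differentiableAt.differentiableWithinAt) (fun t ht => (hE t ht).deriv)
    ht ht₀
  simp only [h₀, h₀'] at hconst
  have : ω ^ 2 * G t ^ 2 = 0 := by nlinarith [sq_nonneg (G' t), sq_nonneg (G t), sq_nonneg ω]
  simpa [hω] using this

lemma sin_mem_Ioo_of_mem_Ioo {θ : ℝ} (hθ : θ ∈ Ioo (-(π / 2)) (π / 2)) : sin θ ∈ Ioo (-1) 1 := by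
  have hmem : θ ∈ Icc (-(π / 2)) (π / 2) := Ioo_subset_Icc_self hθ
  constructor
  · simpa using strictMonoOn_sin (left_mem_Icc.2 (by linarith [pi_pos])) hmem hθ.1
  · simpa using strictMonoOn_sin hmem (right_mem_Icc.2 (by linarith [pi_pos])) hθ.2

lemma eq_sin_mul_arcsin_of_hasDerivAt {f f' f'' : ℝ → ℝ} {a : ℝ} (ha : a ≠ 0)
    (hf : ∀ x ∈ Ioo (-1) 1, HasDerivAt f (f' x) x)
    (hf' : ∀ x ∈ Ioo (-1) 1, HasDerivAt f' (f'' x) x)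
    (hode : ∀ x ∈ Ioo (-1) 1, (1 - x ^ 2) * f'' x - x * f' x + a ^ 2 * f x = 0)
    (h₀ : f 0 = 0) (h₀' : f' 0 = a) {x : ℝ} (hx : x ∈ Ioo (-1) 1) :
    f x = sin (a * arcsin x) := by
  have hG (θ : ℝ) (hθ : θ ∈ Ioo (-(π / 2)) (π / 2)) :
      HasDerivAt (fun θ => f (sin θ) - sin (a * θ)) (f' (sin θ) * cos θ - a * cos (a * θ)) θ := by
    refine (((hf _ (sin_mem_Ioo_of_mem_Ioo hθ)).comp θ (hasDerivAt_sin θ)).sub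
      ((hasDerivAt_id θ).const_mul a).sin).congr_deriv ?_
    simp only [id, mul_one]
    ring
  have hG' (θ : ℝ) (hθ : θ ∈ Ioo (-(π / 2)) (π / 2)) :
      HasDerivAt (fun θ => f' (sin θ) * cos θ - a * cos (a * θ))
        (-(a ^ 2 * (f (sin θ) - sin (a * θ)))) θ := by
    refine ((((hf' _ (sin_mem_Ioo_of_mem_Ioo hθ)).comp θ (hasDerivAt_sin θ)).mul
      (hasDerivAt_cos θ)).sub (((hasDerivAt_id θ).const_mul a).cos.const_mul a)).congr_deriv ?_
    simp only [Function.comp_apply, id, mul_one]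
    linear_combination hode _ (sin_mem_Ioo_of_mem_Ioo hθ) + f'' (sin θ) * sin_sq_add_cos_sq θ
  have harcsin : arcsin x ∈ Ioo (-(π / 2)) (π / 2) :=
    ⟨neg_pi_div_two_lt_arcsin.2 hx.1, arcsin_lt_pi_div_two.2 hx.2⟩
  have := eq_zero_of_hasDerivAt_eq_neg_sq_mul isOpen_Ioo isPreconnected_Ioo ha hG hG'
    (show (0 : ℝ) ∈ Ioo (-(π / 2)) (π / 2) by constructor <;> linarith [pi_pos])
    (by simp [h₀]) (by simp [h₀']) harcsin
  rwa [sin_arcsin hx.1.le hx.2.le, sub_eq_zero] at this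

/-- The Taylor coefficients of `u ↦ sin (a * arcsin u)` at `0`; the recurrence is the one imposed
by the equation `(1 - u²) y'' - u y' + a² y = 0`. -/
noncomputable def sinArcsinCoeff (a : ℝ) : ℕ → ℝ
  | 0 => 0
  | 1 => a
  | k + 2 => (k ^ 2 - a ^ 2) / ((k + 1) * (k + 2)) * sinArcsinCoeff a k

section sinArcsinCoeff

variable {a : ℝ}

lemma sinArcsinCoeff_add_two (k : ℕ) :
    sinArcsinCoeff a (k + 2) = (k ^ 2 - a ^ 2) / ((k + 1) * (k + 2)) * sinArcsinCoeff a k := rfl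

lemma sinArcsinCoeff_two_mul (k : ℕ) : sinArcsinCoeff a (2 * k) = 0 := by
  induction k with
  | zero => rfl
  | succ k ih => rw [mul_add_one, sinArcsinCoeff_add_two, ih, mul_zero]

lemma abs_sinArcsinCoeff_le (ha : |a| ≤ 1) (k : ℕ) : |sinArcsinCoeff a k| ≤ 1 := by
  induction k using Nat.twoStepInduction with
  | zero => simp [sinArcsinCoeff]
  | one => exact ha
  | more k ih _ =>
    rw [sinArcsinCoeff_add_two, abs_mul]
    have hk : (0 : ℝ) ≤ k := k.cast_nonneg
    have ha2 : a ^ 2 ≤ 1 := by nlinarith [sq_abs a, abs_nonneg a]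
    have hratio : |(k ^ 2 - a ^ 2) / ((k + 1) * (k + 2))| ≤ 1 := by
      rw [abs_div, abs_of_pos (by positivity : (0 : ℝ) < (k + 1) * (k + 2)),
        div_le_one (by positivity), abs_le]
      constructor <;> nlinarith [sq_nonneg a]
    exact (mul_le_mul hratio ih (abs_nonneg _) zero_le_one).trans_eq (one_mul 1)

lemma sinArcsinCoeff_nonneg (ha0 : 0 ≤ a) (ha1 : a ≤ 1) (k : ℕ) : 0 ≤ sinArcsinCoeff a k := by
  induction k using Nat.twoStepInduction with
  | zero => rfl
  | one => exact ha0
  | more k ih _ =>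
    rw [sinArcsinCoeff_add_two]
    rcases k.even_or_odd with ⟨j, rfl⟩ | ⟨j, rfl⟩
    · rw [← two_mul, sinArcsinCoeff_two_mul, mul_zero]
    · have hj : a ^ 2 ≤ ((2 * j + 1 : ℕ) : ℝ) ^ 2 := by
        push_cast
        nlinarith [j.cast_nonneg (α := ℝ)]
      exact mul_nonneg (div_nonneg (sub_nonneg.2 hj) (by positivity)) ih

lemma summable_sinArcsinCoeff_mul_pow (ha : |a| ≤ 1) {u : ℝ} (hu : |u| < 1) :
    Summable fun k => sinArcsinCoeff a k * u ^ k :=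
  summable_mul_pow_of_abs_le (fun k => (abs_sinArcsinCoeff_le ha k).trans
    (by nlinarith [k.cast_nonneg (α := ℝ)])) hu

lemma hasDerivAt_tsum_sinArcsinCoeff_mul_pow (ha : |a| ≤ 1) {u : ℝ} (hu : |u| < 1) :
    HasDerivAt (fun x => ∑' k, sinArcsinCoeff a k * x ^ k)
      (∑' k, (k + 1) * sinArcsinCoeff a (k + 1) * u ^ k) u :=
  hasDerivAt_tsum_mul_pow
    (fun k => by linarith [abs_sinArcsinCoeff_le ha k, k.cast_nonneg (α := ℝ)]) hu

lemma abs_succ_mul_sinArcsinCoeff_succ_le (ha : |a| ≤ 1) (k : ℕ) :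
    |(k + 1) * sinArcsinCoeff a (k + 1)| ≤ k + 1 := by
  rw [abs_mul, abs_of_nonneg (by positivity)]
  exact mul_le_of_le_one_right (by positivity) (abs_sinArcsinCoeff_le ha _)

lemma abs_sq_sub_sq_mul_sinArcsinCoeff_le (ha : |a| ≤ 1) (k : ℕ) :
    |(k ^ 2 - a ^ 2) * sinArcsinCoeff a k| ≤ (k + 1) * (k + 2) := by
  have hka : |(k : ℝ) ^ 2 - a ^ 2| ≤ (k + 1) * (k + 2) := by
    rw [abs_le]
    constructor <;> nlinarith [k.cast_nonneg (α := ℝ), sq_abs a, abs_nonneg a]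
  rw [abs_mul]
  nlinarith [abs_sinArcsinCoeff_le ha k, abs_nonneg (sinArcsinCoeff a k),
    abs_nonneg ((k : ℝ) ^ 2 - a ^ 2)]

lemma hasDerivAt_tsum_succ_mul_sinArcsinCoeff_mul_pow (ha : |a| ≤ 1) {u : ℝ} (hu : |u| < 1) :
    HasDerivAt (fun x => ∑' k, (k + 1) * sinArcsinCoeff a (k + 1) * x ^ k)
      (∑' k, (k ^ 2 - a ^ 2) * sinArcsinCoeff a k * u ^ k) u := by
  refine (hasDerivAt_tsum_mul_pow (abs_succ_mul_sinArcsinCoeff_succ_le ha) hu).congr_deriv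
    (tsum_congr fun k => ?_)
  rw [sinArcsinCoeff_add_two]
  push_cast
  field_simp
  ring

lemma sinArcsinCoeff_series_ode (ha : |a| ≤ 1) {u : ℝ} (hu : |u| < 1) :
    (1 - u ^ 2) * ∑' k, (k ^ 2 - a ^ 2) * sinArcsinCoeff a k * u ^ k
      - u * ∑' k, (k + 1) * sinArcsinCoeff a (k + 1) * u ^ k
      + a ^ 2 * ∑' k, sinArcsinCoeff a k * u ^ k = 0 := by
  have h0 := (summable_sinArcsinCoeff_mul_pow ha hu).hasSum
  have h1 := (summable_mul_pow_of_abs_le (fun k => (abs_succ_mul_sinArcsinCoeff_succ_le ha k).trans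
    (by nlinarith [k.cast_nonneg (α := ℝ)])) hu).hasSum
  have h2 := (summable_mul_pow_of_abs_le (abs_sq_sub_sq_mul_sinArcsinCoeff_le ha) hu).hasSum
  -- `u f'` and `u² f''` re-indexed as series in `u ^ k`; the terms they lose vanish.
  have h1' : HasSum (fun k : ℕ => k * sinArcsinCoeff a k * u ^ k)
      (u * ∑' k, (k + 1) * sinArcsinCoeff a (k + 1) * u ^ k) := by
    rw [← hasSum_nat_add_iff' 1, Finset.sum_range_one, Nat.cast_zero, zero_mul, zero_mul,
      sub_zero]
    convert h1.mul_left u using 2 with k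
    · rfl
    · push_cast
      ring
  have h2' : HasSum (fun k : ℕ => k * (k - 1) * sinArcsinCoeff a k * u ^ k)
      (u ^ 2 * ∑' k, (k ^ 2 - a ^ 2) * sinArcsinCoeff a k * u ^ k) := by
    rw [← hasSum_nat_add_iff' 2]
    convert h2.mul_left (u ^ 2) using 2 with k
    · rfl
    · rw [sinArcsinCoeff_add_two]
      push_cast
      field_simp
      ring
    · simp [Finset.sum_range_succ]
  have hsum := ((h2.sub h2').sub h1').add (h0.mul_left (a ^ 2))
  have hzero : HasSum (fun k : ℕ => (k ^ 2 - a ^ 2) * sinArcsinCoeff a k * u ^ k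
      - k * (k - 1) * sinArcsinCoeff a k * u ^ k - k * sinArcsinCoeff a k * u ^ k
      + a ^ 2 * (sinArcsinCoeff a k * u ^ k)) 0 := by
    convert hasSum_zero with k
    ring
  linear_combination hsum.unique hzero

lemma hasSum_sinArcsinCoeff_mul_pow_of_abs_lt (ha0 : a ≠ 0) (ha : |a| ≤ 1) {u : ℝ}
    (hu : |u| < 1) : HasSum (fun k => sinArcsinCoeff a k * u ^ k) (sin (a * arcsin u)) := by
  have h₀ : ∑' k, sinArcsinCoeff a k * (0 : ℝ) ^ k = 0 := by
    rw [tsum_eq_single 0 fun k hk => by simp [hk]]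
    simp [sinArcsinCoeff]
  have h₀' : ∑' k : ℕ, (k + 1) * sinArcsinCoeff a (k + 1) * (0 : ℝ) ^ k = a := by
    rw [tsum_eq_single 0 fun k hk => by simp [hk]]
    simp [sinArcsinCoeff]
  rw [← eq_sin_mul_arcsin_of_hasDerivAt ha0
    (fun x hx => hasDerivAt_tsum_sinArcsinCoeff_mul_pow ha (abs_lt.2 hx))
    (fun x hx => hasDerivAt_tsum_succ_mul_sinArcsinCoeff_mul_pow ha (abs_lt.2 hx))
    (fun x hx => sinArcsinCoeff_series_ode ha (abs_lt.2 hx)) h₀ h₀' (abs_lt.1 hu)]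
  exact (summable_sinArcsinCoeff_mul_pow ha hu).hasSum

lemma hasSum_sinArcsinCoeff (ha0 : 0 < a) (ha1 : a ≤ 1) :
    HasSum (sinArcsinCoeff a) (sin (a * (π / 2))) := by
  have hnonneg := sinArcsinCoeff_nonneg ha0.le ha1
  have ha : |a| ≤ 1 := by rwa [abs_of_pos ha0]
  have hIoo : ∀ᶠ u in 𝓝[<] (1 : ℝ), u ∈ Ioo 0 1 := Ioo_mem_nhdsLT zero_lt_one
  have hlt {u : ℝ} (hu : u ∈ Ioo 0 1) : |u| < 1 := by rw [abs_of_pos hu.1]; exact hu.2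
  have hpartial (N : ℕ) : ∑ k ∈ Finset.range N, sinArcsinCoeff a k ≤ 1 := by
    refine le_of_tendsto (f := fun u => ∑ k ∈ Finset.range N, sinArcsinCoeff a k * u ^ k)
      (x := 𝓝[<] 1) ?_ (hIoo.mono fun u hu => ?_)
    · have hcont : Continuous fun u : ℝ => ∑ k ∈ Finset.range N, sinArcsinCoeff a k * u ^ k := by
        fun_prop
      simpa using (hcont.tendsto 1).mono_left nhdsWithin_le_nhds
    · exact (sum_le_hasSum _ (fun k _ => mul_nonneg (hnonneg k) (pow_nonneg hu.1.le k))
        (hasSum_sinArcsinCoeff_mul_pow_of_abs_lt ha0.ne' ha (hlt hu))).trans (sin_le_one _)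
  have hsum := summable_of_sum_range_le hnonneg hpartial
  have habel := tendsto_tsum_powerSeries_nhdsWithin_lt hsum.hasSum.tendsto_sum_nat
  have hlim : Tendsto (fun u => ∑' k, sinArcsinCoeff a k * u ^ k) (𝓝[<] 1)
      (𝓝 (sin (a * arcsin 1))) := by
    refine Tendsto.congr' (hIoo.mono fun u hu =>
      (hasSum_sinArcsinCoeff_mul_pow_of_abs_lt ha0.ne' ha (hlt hu)).tsum_eq.symm) ?_
    exact ((continuous_sin.comp (continuous_const.mul continuous_arcsin)).tendsto 1).mono_left
      nhdsWithin_le_nhds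
  rw [← arcsin_one, ← tendsto_nhds_unique habel hlim]
  exact hsum.hasSum

lemma hasSum_sinArcsinCoeff_mul_pow (ha0 : 0 < a) (ha1 : a ≤ 1) {u : ℝ} (hu : u ∈ Ioc (-1) 1) :
    HasSum (fun k => sinArcsinCoeff a k * u ^ k) (sin (a * arcsin u)) := by
  rcases hu.2.lt_or_eq with hu1 | rfl
  · exact hasSum_sinArcsinCoeff_mul_pow_of_abs_lt ha0.ne' (by rwa [abs_of_pos ha0])
      (abs_lt.2 ⟨hu.1, hu1⟩)
  · simpa [arcsin_one] using hasSum_sinArcsinCoeff ha0 ha1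

lemma HasSum.sinArcsinCoeff_odd {u s : ℝ} (h : HasSum (fun k => sinArcsinCoeff a k * u ^ k) s) :
    HasSum (fun n => sinArcsinCoeff a (2 * n + 1) * u ^ (2 * n + 1)) s := by
  refine (Function.Injective.hasSum_iff (f := fun k => sinArcsinCoeff a k * u ^ k)
    (g := fun n => 2 * n + 1) (fun m n h => by simpa using h) fun k hk => ?_).2 h
  obtain ⟨j, rfl | rfl⟩ := Nat.even_or_odd' k
  · rw [sinArcsinCoeff_two_mul, zero_mul]
  · exact absurd (Set.mem_range_self j) hk

end sinArcsinCoeff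

lemma S_eq_factorial (n : ℕ) :
    S n = (6 * n)! * n ! / (2 * (2 * n + 1) * (3 * n)! * (2 * n)! ^ 2) := by
  unfold S
  split_ifs with hn
  · subst hn
    norm_num
  rw [Nat.cast_choose ℝ (by omega : 3 * n ≤ 6 * n), Nat.cast_choose ℝ (by omega : n ≤ 3 * n),
    Nat.cast_choose ℝ (by omega : n ≤ 2 * n), show 6 * n - 3 * n = 3 * n by omega,
    show 3 * n - n = 2 * n by omega, show 2 * n - n = n by omega]
  field_simp

lemma S_succ_mul (n : ℕ) :
    S (n + 1) * ((2 * n + 3) * (n + 1)) = S n * (6 * (6 * n + 1) * (6 * n + 5)) := by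
  rw [S_eq_factorial, S_eq_factorial, show 6 * (n + 1) = 6 * n + 5 + 1 by ring,
    show 3 * (n + 1) = 3 * n + 2 + 1 by ring, show 2 * (n + 1) = 2 * n + 1 + 1 by ring]
  simp only [Nat.factorial_succ]
  push_cast
  field_simp
  ring

lemma S_eq_sinArcsinCoeff (n : ℕ) :
    S n = 3 / 4 * sinArcsinCoeff (2 / 3) (2 * n + 1) * 108 ^ n := by
  induction n with
  | zero => norm_num [S, sinArcsinCoeff]
  | succ n ih =>
    have hne : (2 * (n : ℝ) + 3) * (n + 1) ≠ 0 := by positivity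
    refine mul_right_cancel₀ hne ((S_succ_mul n).trans ?_)
    rw [ih, show 2 * (n + 1) + 1 = 2 * n + 1 + 2 by ring, sinArcsinCoeff_add_two]
    push_cast
    field_simp
    ring

theorem S_generating_function (x : ℝ) (hx0 : 0 < x) (hx : x ≤ 1 / 108) :
    HasSum (fun n : ℕ => S n * x ^ n)
      (Real.sin ((2 / 3) * Real.arcsin (6 * Real.sqrt (3 * x))) / (8 * Real.sqrt (3 * x))) := by
  set u := 6 * √(3 * x) with hu
  have hu0 : 0 < u := by positivity
  have hu2 : u ^ 2 = 108 * x := by rw [hu, mul_pow, sq_sqrt (by positivity)]; ring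
  have hu1 : u ≤ 1 := by nlinarith
  have hsum := ((hasSum_sinArcsinCoeff_mul_pow (a := 2 / 3) (by norm_num) (by norm_num)
    ⟨by linarith, hu1⟩).sinArcsinCoeff_odd).mul_left (3 / (4 * u))
  have hterm (n : ℕ) : S n * x ^ n
      = 3 / (4 * u) * (sinArcsinCoeff (2 / 3) (2 * n + 1) * u ^ (2 * n + 1)) := by
    rw [S_eq_sinArcsinCoeff, pow_succ, pow_mul, hu2]
    field_simp
    ring
  have hvalue : sin (2 / 3 * arcsin u) / (8 * √(3 * x)) = 3 / (4 * u) * sin (2 / 3 * arcsin u) := by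
    rw [hu]
    field_simp
    ring
  rw [funext hterm, hvalue]
  exact hsum
end

section
/- The function f(x) = ∑_{n≥0} S_n x^{2n+3}/(2n+3) satisfies f(1/(6√3)) = 1/6144, where S_0 = 1/2 and S_n = C(6n,3n)·C(3n,n)/(2(2n+1)·C(2n,n)) for n ≥ 1. -/
/-!
Write `S n = b n * 108 ^ n / (2 * (2 * n + 1))`, where `b n` are the Taylor coefficients of
`F = ₂F₁(1/6, 5/6; 1/2; w)`. At `x = 1 / (6√3)` we have `108 x² = 1`, so the `n`-th term is
`b n / (2592 √3) * 2 / ((2n+1)(2n+3))`, and `2 / ((2n+1)(2n+3)) = ∫₀^{π/2} sin^{2n} θ cos³ θ dθ`.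
Under `w = sin² θ` the hypergeometric equation of `F` becomes `y'' = -(4/9) y` for
`y θ = cos θ * F (sin² θ)`, so `cos θ * F (sin² θ) = cos (2θ/3)` on `(-π/2, π/2)`. Summing under the
integral sign, the series equals `∫₀^{π/2} cos² θ cos (2θ/3) dθ / (2592 √3) = 27√3/64 / (2592 √3)`.
-/

open Real Set Filter intervalIntegral
open scoped Nat Interval

lemma summable_succ_pow_mul_geometric (k : ℕ) {r : ℝ} (h0 : 0 < r) (h1 : r < 1) :
    Summable fun n : ℕ => ((n : ℝ) + 1) ^ k * r ^ n := by
  have := (summable_nat_add_iff 1).mpr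
    (summable_pow_mul_geometric_of_norm_lt_one (R := ℝ) k (by rwa [norm_of_nonneg h0.le]))
  refine (this.mul_left r⁻¹).congr fun n => ?_
  push_cast
  rw [pow_succ]
  field_simp

noncomputable def powerSeriesSum (a : ℕ → ℝ) (x : ℝ) : ℝ := ∑' n, a n * x ^ n

def derivCoeff (a : ℕ → ℝ) (n : ℕ) : ℝ := (n + 1) * a (n + 1)

section PowerSeries

variable {a : ℕ → ℝ} {C : ℝ} {k : ℕ}

lemma abs_derivCoeff_le (ha : ∀ n, |a n| ≤ C * ((n : ℝ) + 1) ^ k) (n : ℕ) :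
    |derivCoeff a n| ≤ 2 ^ k * C * ((n : ℝ) + 1) ^ (k + 1) := by
  have hC : 0 ≤ C := by simpa using (abs_nonneg _).trans (ha 0)
  have hpow : ((n : ℝ) + 1 + 1) ^ k ≤ 2 ^ k * ((n : ℝ) + 1) ^ k := by
    rw [← mul_pow]
    gcongr
    linarith
  calc |derivCoeff a n| = ((n : ℝ) + 1) * |a (n + 1)| := by
        rw [derivCoeff, abs_mul, abs_of_pos (by positivity)]
    _ ≤ ((n : ℝ) + 1) * (C * (2 ^ k * ((n : ℝ) + 1) ^ k)) := by
        gcongr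
        exact (ha (n + 1)).trans (by push_cast; gcongr)
    _ = 2 ^ k * C * ((n : ℝ) + 1) ^ (k + 1) := by ring

lemma norm_mul_pow_le (ha : ∀ n, |a n| ≤ C * ((n : ℝ) + 1) ^ k) {x r : ℝ} (hxr : |x| ≤ r)
    (n : ℕ) : ‖a n * x ^ n‖ ≤ C * (((n : ℝ) + 1) ^ k * r ^ n) := by
  rw [norm_eq_abs, abs_mul, abs_pow, ← mul_assoc]
  exact mul_le_mul (ha n) (pow_le_pow_left₀ (abs_nonneg x) hxr n) (by positivity)
    ((abs_nonneg _).trans (ha n))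

lemma summable_mul_pow (ha : ∀ n, |a n| ≤ C * ((n : ℝ) + 1) ^ k) {x : ℝ} (hx : |x| < 1) :
    Summable fun n => a n * x ^ n :=
  .of_norm_bounded ((summable_succ_pow_mul_geometric k (r := (|x| + 1) / 2) (by positivity)
    (by linarith)).mul_left C) (norm_mul_pow_le ha (by linarith))

lemma hasSum_powerSeriesSum (ha : ∀ n, |a n| ≤ C * ((n : ℝ) + 1) ^ k) {x : ℝ} (hx : |x| < 1) :
    HasSum (fun n => a n * x ^ n) (powerSeriesSum a x) :=
  (summable_mul_pow ha hx).hasSum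

lemma powerSeriesSum_zero (a : ℕ → ℝ) : powerSeriesSum a 0 = a 0 := by
  rw [powerSeriesSum, tsum_eq_single 0 (fun n hn => by simp [hn])]
  simp

theorem hasDerivAt_powerSeriesSum (ha : ∀ n, |a n| ≤ C * ((n : ℝ) + 1) ^ k) {x : ℝ}
    (hx : |x| < 1) : HasDerivAt (powerSeriesSum a) (powerSeriesSum (derivCoeff a) x) x := by
  set r := (|x| + 1) / 2 with hr_def
  have hxr : x ∈ Ioo (-r) r := abs_lt.mp (by linarith)
  have hr : r < 1 := by linarith
  -- the series without its constant term, so that no exponent `n - 1` appears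
  have htail : HasDerivAt (fun y => ∑' n, a (n + 1) * y ^ (n + 1))
      (∑' n, derivCoeff a n * x ^ n) x := by
    refine hasDerivAt_tsum_of_isPreconnected (g := fun n y => a (n + 1) * y ^ (n + 1))
      (g' := fun n y => derivCoeff a n * y ^ n)
      ((summable_succ_pow_mul_geometric (k + 1) (by positivity) hr).mul_left (2 ^ k * C))
      isOpen_Ioo (convex_Ioo _ _).isPreconnected (fun n y _ => ?_) (fun n y hy => ?_)
      (y₀ := 0) ⟨by linarith [abs_nonneg x], by positivity⟩ (by simp [summable_zero]) hxr
    · refine ((hasDerivAt_pow (n + 1) y).const_mul (a (n + 1))).congr_deriv ?_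
      rw [derivCoeff, Nat.add_sub_cancel]
      push_cast
      ring
    · exact norm_mul_pow_le (abs_derivCoeff_le ha) (abs_le.mpr ⟨hy.1.le, hy.2.le⟩) n
  refine (htail.const_add (a 0)).congr_of_eventuallyEq ?_
  filter_upwards [Ioo_mem_nhds hxr.1 hxr.2] with y hy
  have hy1 : |y| < 1 := abs_lt.mpr ⟨by linarith [hy.1], by linarith [hy.2]⟩
  rw [powerSeriesSum, (summable_mul_pow ha hy1).tsum_eq_zero_add]
  simp

lemma hasSum_mul_pow_of_succ {c d : ℕ → ℝ} (hc0 : c 0 = 0) (hcd : ∀ n, c (n + 1) = d n)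
    {x s : ℝ} (h : HasSum (fun n => d n * x ^ n) s) : HasSum (fun n => c n * x ^ n) (x * s) := by
  rw [← hasSum_nat_add_iff' 1]
  simpa [hc0, hcd, pow_succ, mul_comm, mul_left_comm] using h.mul_left x

end PowerSeries

theorem eqOn_cos_of_hasDerivAt {y y' : ℝ → ℝ} {ω a b : ℝ} (h0 : (0 : ℝ) ∈ Ioo a b)
    (hy : ∀ t ∈ Ioo a b, HasDerivAt y (y' t) t)
    (hy' : ∀ t ∈ Ioo a b, HasDerivAt y' (-ω ^ 2 * y t) t) (hy0 : y 0 = 1) (hy'0 : y' 0 = 0) :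
    EqOn y (fun t => cos (ω * t)) (Ioo a b) := by
  let L : ℝ × ℝ →L[ℝ] ℝ × ℝ :=
    (ContinuousLinearMap.snd ℝ ℝ ℝ).prod (-ω ^ 2 • ContinuousLinearMap.fst ℝ ℝ ℝ)
  have hcos (t : ℝ) : HasDerivAt (fun t => cos (ω * t)) (-ω * sin (ω * t)) t :=
    (((hasDerivAt_id t).const_mul ω).cos).congr_deriv (by simp only [id, mul_one]; ring)
  have hsin (t : ℝ) : HasDerivAt (fun t => -ω * sin (ω * t)) (-ω ^ 2 * cos (ω * t)) t :=
    ((((hasDerivAt_id t).const_mul ω).sin).const_mul (-ω)).congr_deriv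
      (by simp only [id, mul_one]; ring)
  have hsol := ODE_solution_unique_of_mem_Ioo (v := fun _ => L) (s := fun _ => univ)
    (f := fun t => (y t, y' t)) (g := fun t => (cos (ω * t), -ω * sin (ω * t)))
    (fun _ _ => L.lipschitz.lipschitzOnWith) h0
    (fun t ht => ⟨(hy t ht).prodMk (hy' t ht), mem_univ _⟩)
    (fun t _ => ⟨(hcos t).prodMk (hsin t), mem_univ _⟩) (by simp [hy0, hy'0])
  exact fun t ht => congrArg Prod.fst (hsol ht)

-- The ratio of consecutive terms is `(n + 1/6)(n + 5/6) / ((n + 1/2)(n + 1))` (see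
-- `hypergeomCoeff_succ`): these are the Taylor coefficients of `₂F₁(1/6, 5/6; 1/2; w)`.
noncomputable def hypergeomCoeff (n : ℕ) : ℝ :=
  ((6 * n).choose (3 * n) * (3 * n).choose n : ℝ) / ((2 * n).choose n * 108 ^ n)

lemma S_eq_hypergeomCoeff (n : ℕ) : S n = hypergeomCoeff n * 108 ^ n / (2 * (2 * n + 1)) := by
  rcases eq_or_ne n 0 with rfl | hn
  · simp [S, hypergeomCoeff]
  · have := Nat.choose_pos (by omega : n ≤ 2 * n)
    rw [S, if_neg hn, hypergeomCoeff]
    field_simp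

lemma hypergeomCoeff_eq_factorial (n : ℕ) :
    hypergeomCoeff n = ((6 * n)! * n ! : ℝ) / ((3 * n)! * (2 * n)! ^ 2 * 108 ^ n) := by
  rw [hypergeomCoeff, Nat.cast_choose ℝ (by omega : 3 * n ≤ 6 * n),
    Nat.cast_choose ℝ (by omega : n ≤ 3 * n), Nat.cast_choose ℝ (by omega : n ≤ 2 * n),
    show 6 * n - 3 * n = 3 * n by omega, show 3 * n - n = 2 * n by omega,
    show 2 * n - n = n by omega]
  field_simp

lemma hypergeomCoeff_succ (n : ℕ) :
    9 * (2 * n + 1) * (2 * n + 2) * hypergeomCoeff (n + 1)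
      = (6 * n + 1) * (6 * n + 5) * hypergeomCoeff n := by
  rw [hypergeomCoeff_eq_factorial, hypergeomCoeff_eq_factorial,
    show 6 * (n + 1) = 6 * n + 5 + 1 by ring, show 3 * (n + 1) = 3 * n + 2 + 1 by ring,
    show 2 * (n + 1) = 2 * n + 1 + 1 by ring]
  simp only [Nat.factorial_succ]
  push_cast
  field_simp
  ring

lemma hypergeomCoeff_pos (n : ℕ) : 0 < hypergeomCoeff n := by
  have := Nat.choose_pos (by omega : 3 * n ≤ 6 * n)
  have := Nat.choose_pos (by omega : n ≤ 3 * n)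
  have := Nat.choose_pos (by omega : n ≤ 2 * n)
  unfold hypergeomCoeff
  positivity

lemma hypergeomCoeff_le_one (n : ℕ) : hypergeomCoeff n ≤ 1 := by
  induction n with
  | zero => simp [hypergeomCoeff]
  | succ n ih =>
    have hrec := hypergeomCoeff_succ n
    have hpos := hypergeomCoeff_pos n
    have : 0 < 9 * (2 * (n : ℝ) + 1) * (2 * n + 2) := by positivity
    nlinarith

lemma abs_hypergeomCoeff_le (n : ℕ) : |hypergeomCoeff n| ≤ 1 * ((n : ℝ) + 1) ^ 0 := by
  rw [abs_of_pos (hypergeomCoeff_pos n), pow_zero, mul_one]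
  exact hypergeomCoeff_le_one n

-- The hypergeometric equation `w (1 - w) F'' + (1/2 - 2w) F' = (5/36) F`; coefficientwise it is
-- `hypergeomCoeff_succ`.
lemma hypergeometric_ode {w : ℝ} (hw : |w| < 1) :
    4 * w * (1 - w) * powerSeriesSum (derivCoeff (derivCoeff hypergeomCoeff)) w
      + (2 - 8 * w) * powerSeriesSum (derivCoeff hypergeomCoeff) w
      = 5 / 9 * powerSeriesSum hypergeomCoeff w := by
  have hb := abs_hypergeomCoeff_le
  have hF := hasSum_powerSeriesSum hb hw
  have hF' := hasSum_powerSeriesSum (abs_derivCoeff_le hb) hw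
  have hF'' := hasSum_powerSeriesSum (abs_derivCoeff_le (abs_derivCoeff_le hb)) hw
  have hwF' := hasSum_mul_pow_of_succ (c := fun n => n * hypergeomCoeff n) (by simp)
    (fun n => by simp [derivCoeff]) hF'
  have hwF'' := hasSum_mul_pow_of_succ (c := fun n => n * derivCoeff hypergeomCoeff n) (by simp)
    (fun n => by simp [derivCoeff]) hF''
  have hwwF'' := hasSum_mul_pow_of_succ (c := fun n => n * (n - 1) * hypergeomCoeff n)
    (by simp) (fun n => by rw [derivCoeff]; push_cast; ring) hwF''
  have hcomb := ((hwF''.mul_left 4).add (hF'.mul_left 2)).sub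
    (((hwwF''.mul_left 4).add (hwF'.mul_left 8)).add (hF.mul_left (5 / 9)))
  have hzero := hcomb.unique <| hasSum_zero.congr_fun fun n => by
    simp only [derivCoeff]
    linear_combination (w ^ n / 9) * hypergeomCoeff_succ n
  linear_combination hzero

lemma abs_sin_sq_lt_one {θ : ℝ} (hθ : θ ∈ Ioo (-(π / 2)) (π / 2)) : |sin θ ^ 2| < 1 := by
  have := cos_pos_of_mem_Ioo hθ
  rw [abs_of_nonneg (by positivity)]
  nlinarith [sin_sq_add_cos_sq θ]

lemma hasDerivAt_powerSeriesSum_sin_sq {a : ℕ → ℝ} {C : ℝ} {k : ℕ}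
    (ha : ∀ n, |a n| ≤ C * ((n : ℝ) + 1) ^ k) {θ : ℝ} (hθ : θ ∈ Ioo (-(π / 2)) (π / 2)) :
    HasDerivAt (fun t => powerSeriesSum a (sin t ^ 2))
      (2 * sin θ * cos θ * powerSeriesSum (derivCoeff a) (sin θ ^ 2)) θ := by
  refine ((hasDerivAt_powerSeriesSum ha (abs_sin_sq_lt_one hθ)).comp θ
    ((hasDerivAt_sin θ).fun_pow 2)).congr_deriv ?_
  simp only [Nat.cast_ofNat, Nat.add_one_sub_one, pow_one]
  ring

-- `y θ = cos θ * F (sin² θ)` solves `y'' = -(4/9) y` with `y 0 = 1`, `y' 0 = 0`.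
theorem cos_mul_powerSeriesSum_hypergeomCoeff_sin_sq {θ : ℝ}
    (hθ : θ ∈ Ioo (-(π / 2)) (π / 2)) :
    cos θ * powerSeriesSum hypergeomCoeff (sin θ ^ 2) = cos (2 / 3 * θ) := by
  have hb := abs_hypergeomCoeff_le
  refine eqOn_cos_of_hasDerivAt (y := fun t => cos t * powerSeriesSum hypergeomCoeff (sin t ^ 2))
    (y' := fun t => -sin t * powerSeriesSum hypergeomCoeff (sin t ^ 2)
      + 2 * sin t * cos t ^ 2 * powerSeriesSum (derivCoeff hypergeomCoeff) (sin t ^ 2))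
    ⟨by linarith [pi_pos], by linarith [pi_pos]⟩ (fun t ht => ?_) (fun t ht => ?_)
    (by simp [powerSeriesSum_zero, hypergeomCoeff]) (by simp) hθ
  · exact ((hasDerivAt_cos t).mul (hasDerivAt_powerSeriesSum_sin_sq hb ht)).congr_deriv
      (by ring)
  · have hode := hypergeometric_ode (abs_sin_sq_lt_one ht)
    have hderiv :=
      ((hasDerivAt_sin t).fun_neg.fun_mul (hasDerivAt_powerSeriesSum_sin_sq hb ht)).fun_add
        ((((hasDerivAt_sin t).const_mul 2).fun_mul ((hasDerivAt_cos t).fun_pow 2)).fun_mul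
          (hasDerivAt_powerSeriesSum_sin_sq (abs_derivCoeff_le hb) ht))
    refine hderiv.congr_deriv ?_
    set F' := powerSeriesSum (derivCoeff hypergeomCoeff) (sin t ^ 2)
    set F'' := powerSeriesSum (derivCoeff (derivCoeff hypergeomCoeff)) (sin t ^ 2)
    simp only [Nat.cast_ofNat, Nat.add_one_sub_one, pow_one]
    linear_combination cos t * hode + cos t * (2 * F' + 4 * sin t ^ 2 * F'') * sin_sq_add_cos_sq t

lemma integral_sin_pow_mul_cos_pow_three (m : ℕ) :
    ∫ θ in (0)..(π / 2), sin θ ^ m * cos θ ^ 3 = 2 / ((m + 1) * (m + 3)) := by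
  have h := integral_sin_pow_mul_cos_pow_odd (a := 0) (b := π / 2) m 1
  simp only [sin_zero, sin_pi_div_two, pow_one, mul_sub, mul_one, ← pow_add] at h
  rw [h, integral_sub (intervalIntegrable_pow _) (intervalIntegrable_pow _), integral_pow,
    integral_pow]
  field_simp
  push_cast
  ring

lemma integral_cos_sq_mul_cos_two_thirds :
    ∫ θ in (0)..(π / 2), cos θ ^ 2 * cos (2 / 3 * θ) = 27 * √3 / 64 := by
  have hderiv : ∀ θ ∈ uIcc 0 (π / 2), HasDerivAt
      (fun x => 3 / 4 * sin (2 / 3 * x) + 3 / 16 * sin (4 / 3 * x) + 3 / 32 * sin (8 / 3 * x))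
      (cos θ ^ 2 * cos (2 / 3 * θ)) θ := by
    intro θ _
    have hsin (c : ℝ) : HasDerivAt (fun x => sin (c * x)) (c * cos (c * θ)) θ :=
      (((hasDerivAt_id θ).const_mul c).sin).congr_deriv (by simp only [id, mul_one]; ring)
    refine ((((hsin _).const_mul _).add ((hsin _).const_mul _)).add
      ((hsin _).const_mul _)).congr_deriv ?_
    rw [show 4 / 3 * θ = 2 * θ - 2 / 3 * θ by ring, show 8 / 3 * θ = 2 * θ + 2 / 3 * θ by ring,
      cos_sub, cos_add, cos_two_mul, sin_two_mul]
    ring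
  rw [integral_eq_sub_of_hasDerivAt hderiv (Continuous.intervalIntegrable (by fun_prop) _ _),
    show 2 / 3 * (π / 2) = π / 3 by ring, show 4 / 3 * (π / 2) = π - π / 3 by ring,
    show 8 / 3 * (π / 2) = π / 3 + π by ring, sin_pi_sub, sin_add_pi, sin_pi_div_three]
  simp only [mul_zero, sin_zero, add_zero]
  ring

lemma hasSum_hypergeomCoeff_mul_sin_pow_mul_cos_pow_three {θ : ℝ}
    (hθ : θ ∈ Icc (-(π / 2)) (π / 2)) :
    HasSum (fun n => hypergeomCoeff n * (sin θ ^ (2 * n) * cos θ ^ 3))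
      (cos θ ^ 2 * cos (2 / 3 * θ)) := by
  rcases eq_or_ne (cos θ) 0 with hcos | hcos
  · simp [hcos, hasSum_zero]
  have hθ' : θ ∈ Ioo (-(π / 2)) (π / 2) :=
    ⟨hθ.1.lt_of_ne fun h => hcos (by simp [← h]), hθ.2.lt_of_ne fun h => hcos (by simp [h])⟩
  rw [← cos_mul_powerSeriesSum_hypergeomCoeff_sin_sq hθ', ← mul_assoc, ← pow_succ]
  exact ((hasSum_powerSeriesSum abs_hypergeomCoeff_le (abs_sin_sq_lt_one hθ')).mul_left
    (cos θ ^ 3)).congr_fun fun n => by rw [pow_mul]; ring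

-- The terms are nonnegative on `[0, π/2]`, so they serve as their own dominating bound.
theorem hasSum_hypergeomCoeff_mul_two_div :
    HasSum (fun n => hypergeomCoeff n * (2 / ((2 * n + 1) * (2 * n + 3)))) (27 * √3 / 64) := by
  have hlim : ∀ θ ∈ Ι 0 (π / 2),
      HasSum (fun n => hypergeomCoeff n * (sin θ ^ (2 * n) * cos θ ^ 3))
        (cos θ ^ 2 * cos (2 / 3 * θ)) := fun θ hθ => by
    rw [uIoc_of_le (by positivity)] at hθ
    exact hasSum_hypergeomCoeff_mul_sin_pow_mul_cos_pow_three
      ⟨by linarith [hθ.1, pi_pos], hθ.2⟩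
  have hnonneg : ∀ n, ∀ θ ∈ Ι 0 (π / 2),
      0 ≤ hypergeomCoeff n * (sin θ ^ (2 * n) * cos θ ^ 3) := by
    intro n θ hθ
    rw [uIoc_of_le (by positivity)] at hθ
    have := cos_nonneg_of_mem_Icc ⟨by linarith [hθ.1, pi_pos], hθ.2⟩
    have := (hypergeomCoeff_pos n).le
    rw [pow_mul]
    positivity
  have hdom := hasSum_integral_of_dominated_convergence (μ := MeasureTheory.volume)
    (F := fun n θ => hypergeomCoeff n * (sin θ ^ (2 * n) * cos θ ^ 3))
    (fun n θ => hypergeomCoeff n * (sin θ ^ (2 * n) * cos θ ^ 3))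
    (fun n => (by fun_prop : Continuous _).aestronglyMeasurable)
    (fun n => .of_forall fun θ hθ => (norm_of_nonneg (hnonneg n θ hθ)).le)
    (.of_forall fun θ hθ => (hlim θ hθ).summable)
    ((intervalIntegrable_congr fun θ hθ => (hlim θ hθ).tsum_eq).mpr
      (Continuous.intervalIntegrable (by fun_prop) _ _))
    (.of_forall hlim)
  rw [integral_cos_sq_mul_cos_two_thirds] at hdom
  refine hdom.congr_fun fun n => ?_
  rw [integral_const_mul, integral_sin_pow_mul_cos_pow_three]
  push_cast
  ring

theorem f_value_at_endpoint :
    HasSum (fun n : ℕ => S n * (1 / (6 * Real.sqrt 3)) ^ (2 * n + 3) / (2 * n + 3))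
      (1 / 6144) := by
  have hsqrt : √3 ^ 2 = 3 := sq_sqrt (by norm_num)
  have hx : (1 / (6 * √3)) ^ 2 = 1 / 108 := by
    rw [div_pow, mul_pow, hsqrt]
    norm_num
  -- `1 / (2592 √3) = (1 / (6√3)) ^ 3 / 4`
  have h := hasSum_hypergeomCoeff_mul_two_div.mul_left (1 / (2592 * √3))
  rw [show 1 / (2592 * √3) * (27 * √3 / 64) = 1 / 6144 by field_simp; norm_num] at h
  refine h.congr_fun fun n => ?_
  rw [S_eq_hypergeomCoeff, pow_add, pow_mul, hx]
  field_simp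
  rw [hsqrt, mul_assoc _ (108 ^ n), ← mul_pow]
  norm_num
  ring
end
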